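/- For the relativistic collision law p' = p + aω, q' = q - aω with a = a(p,q,ω) = 2(p⁰+q⁰)p⁰q⁰(ω·(q̂-p̂)) / ((p⁰+q⁰)² - (ω·(p+q))²), the total relativistic energy is conserved: √(1+|p'|²) + √(1+|q'|²) = √(1+|p|²) + √(1+|q|²). -/
import Mathlib

open scoped RealInnerProductSpace

private lemma relcol_aux_pos (p0 q0 u v : ℝ) (hp0one : 1 ≤ p0) (hq0one : 1 ≤ q0)
    (hup : u ^ 2 ≤ p0 ^ 2 - 1) (hvq : v ^ 2 ≤ q0 ^ 2 - 1)
    (hpu1 : 0 ≤ p0 - u) (hpu2 : 0 ≤ p0 + u) :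
    0 < p0 * ((p0 + q0) ^ 2 - (u + v) ^ 2) + 2 * (u + v) * (p0 * v - q0 * u) := by
  have hp0pos : (0:ℝ) < p0 := by linarith
  have hq0pos : (0:ℝ) < q0 := by linarith
  rcases le_or_gt 0 v with hv0 | hv0
  · nlinarith [mul_nonneg hp0pos.le (sq_nonneg (q0 - v)),
      mul_nonneg (mul_nonneg hq0pos.le hv0) hpu1,
      mul_nonneg hp0pos.le (sub_nonneg.2 hup),
      mul_nonneg hq0pos.le (sub_nonneg.2 hup)]
  · nlinarith [mul_nonneg hp0pos.le (sq_nonneg (q0 + v)),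
      mul_nonneg (mul_nonneg hq0pos.le (le_of_lt (neg_pos.2 hv0))) hpu2,
      mul_nonneg hp0pos.le (sub_nonneg.2 hup),
      mul_nonneg hq0pos.le (sub_nonneg.2 hup)]

set_option maxHeartbeats 1000000 in
/-- Conservation of total relativistic energy in the relativistic elastic
collision law `p' = p + aω`, `q' = q - aω`. -/
theorem relativistic_collision_energy_conservation
    (p q ω : EuclideanSpace ℝ (Fin 3)) (hω : ‖ω‖ = 1)
    (hden : ((Real.sqrt (1 + ‖p‖ ^ 2) + Real.sqrt (1 + ‖q‖ ^ 2)) ^ 2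
      - ⟪ω, p + q⟫ ^ 2) ≠ 0) :
    let p0 : ℝ := Real.sqrt (1 + ‖p‖ ^ 2)
    let q0 : ℝ := Real.sqrt (1 + ‖q‖ ^ 2)
    let a : ℝ := 2 * (p0 + q0) * p0 * q0 * ⟪ω, q0⁻¹ • q - p0⁻¹ • p⟫ /
      ((p0 + q0) ^ 2 - ⟪ω, p + q⟫ ^ 2)
    Real.sqrt (1 + ‖p + a • ω‖ ^ 2) + Real.sqrt (1 + ‖q - a • ω‖ ^ 2)
      = Real.sqrt (1 + ‖p‖ ^ 2) + Real.sqrt (1 + ‖q‖ ^ 2) := by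
  clear hden
  intro p0 q0 a
  show Real.sqrt (1 + ‖p + a • ω‖ ^ 2) + Real.sqrt (1 + ‖q - a • ω‖ ^ 2) = p0 + q0
  have ha_def : a = 2 * (p0 + q0) * p0 * q0 * ⟪ω, q0⁻¹ • q - p0⁻¹ • p⟫ /
      ((p0 + q0) ^ 2 - ⟪ω, p + q⟫ ^ 2) := rfl
  have hp0sq : p0 ^ 2 = 1 + ‖p‖ ^ 2 := Real.sq_sqrt (by positivity)
  have hq0sq : q0 ^ 2 = 1 + ‖q‖ ^ 2 := Real.sq_sqrt (by positivity)
  have hp0one : 1 ≤ p0 := by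
    have h := Real.sqrt_le_sqrt (show (1:ℝ) ≤ 1 + ‖p‖ ^ 2 by nlinarith [sq_nonneg ‖p‖])
    rw [Real.sqrt_one] at h
    exact h
  have hq0one : 1 ≤ q0 := by
    have h := Real.sqrt_le_sqrt (show (1:ℝ) ≤ 1 + ‖q‖ ^ 2 by nlinarith [sq_nonneg ‖q‖])
    rw [Real.sqrt_one] at h
    exact h
  clear_value p0 q0 a
  set u := ⟪ω, p⟫ with hu
  set v := ⟪ω, q⟫ with hv
  clear_value u v
  have hp0pos : (0:ℝ) < p0 := by linarith
  have hq0pos : (0:ℝ) < q0 := by linarith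
  have hs0 : (0:ℝ) < p0 + q0 := by linarith
  have hup : u ^ 2 ≤ p0 ^ 2 - 1 := by
    have h := abs_real_inner_le_norm ω p
    rw [hω, one_mul, ← hu] at h
    nlinarith [sq_abs u, abs_nonneg u, norm_nonneg p]
  have hvq : v ^ 2 ≤ q0 ^ 2 - 1 := by
    have h := abs_real_inner_le_norm ω q
    rw [hω, one_mul, ← hv] at h
    nlinarith [sq_abs v, abs_nonneg v, norm_nonneg q]
  have hpu1 : 0 ≤ p0 - u := by nlinarith [sq_nonneg (p0 - u)]
  have hpu2 : 0 ≤ p0 + u := by nlinarith [sq_nonneg (p0 + u)]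
  have hqv1 : 0 ≤ q0 - v := by nlinarith [sq_nonneg (q0 - v)]
  have hqv2 : 0 ≤ q0 + v := by nlinarith [sq_nonneg (q0 + v)]
  have hD : (0:ℝ) < (p0 + q0) ^ 2 - (u + v) ^ 2 := by nlinarith
  have hb : ⟪ω, p + q⟫ = u + v := by rw [inner_add_right, ← hu, ← hv]
  have hinner : ⟪ω, q0⁻¹ • q - p0⁻¹ • p⟫ = q0⁻¹ * v - p0⁻¹ * u := by
    rw [inner_sub_right, real_inner_smul_right, real_inner_smul_right, ← hu, ← hv]
  have ha : a * ((p0 + q0) ^ 2 - (u + v) ^ 2) = 2 * (p0 + q0) * (p0 * v - q0 * u) := by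
    rw [ha_def, hinner, hb]
    field_simp
  clear ha_def hinner hb
  -- numerator positivity
  have hN : 0 < p0 * ((p0 + q0) ^ 2 - (u + v) ^ 2) + 2 * (u + v) * (p0 * v - q0 * u) :=
    relcol_aux_pos p0 q0 u v hp0one hq0one hup hvq hpu1 hpu2
  have hNq : 0 < q0 * ((p0 + q0) ^ 2 - (u + v) ^ 2) - 2 * (u + v) * (p0 * v - q0 * u) := by
    have h := relcol_aux_pos q0 p0 v u hq0one hp0one hvq hup hqv1 hqv2
    nlinarith [h]
  have h3p : 0 < p0 * (p0 + q0) + a * (u + v) := by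
    have key : (p0 * (p0 + q0) + a * (u + v)) * ((p0 + q0) ^ 2 - (u + v) ^ 2)
        = (p0 + q0) * (p0 * ((p0 + q0) ^ 2 - (u + v) ^ 2) + 2 * (u + v) * (p0 * v - q0 * u)) := by
      linear_combination (u + v) * ha
    nlinarith [mul_pos hs0 hN, key, hD]
  have h3q : 0 < q0 * (p0 + q0) - a * (u + v) := by
    have key : (q0 * (p0 + q0) - a * (u + v)) * ((p0 + q0) ^ 2 - (u + v) ^ 2)
        = (p0 + q0) * (q0 * ((p0 + q0) ^ 2 - (u + v) ^ 2) - 2 * (u + v) * (p0 * v - q0 * u)) := by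
      linear_combination (-(u + v)) * ha
    nlinarith [mul_pos hs0 hNq, key, hD]
  have hnp : ‖p + a • ω‖ ^ 2 = ‖p‖ ^ 2 + 2 * (a * u) + a ^ 2 := by
    have h1 : ⟪p, a • ω⟫ = a * u := by
      rw [real_inner_smul_right, real_inner_comm, hu]
    rw [@norm_add_sq_real, h1, norm_smul, hω, Real.norm_eq_abs, mul_one, sq_abs]
  have hnq : ‖q - a • ω‖ ^ 2 = ‖q‖ ^ 2 - 2 * (a * v) + a ^ 2 := by
    have h1 : ⟪q, a • ω⟫ = a * v := by
      rw [real_inner_smul_right, real_inner_comm, hv]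
    rw [@norm_sub_sq_real, h1, norm_smul, hω, Real.norm_eq_abs, mul_one, sq_abs]
  have hs2 : ((p0 + q0) ^ 2 : ℝ) ≠ 0 := by positivity
  have hEp : Real.sqrt (1 + ‖p + a • ω‖ ^ 2)
      = (p0 * (p0 + q0) + a * (u + v)) / (p0 + q0) := by
    have hsq2 : 1 + ‖p + a • ω‖ ^ 2 = ((p0 * (p0 + q0) + a * (u + v)) / (p0 + q0)) ^ 2 := by
      rw [div_pow, eq_div_iff hs2, hnp, show ‖p‖ ^ 2 = p0 ^ 2 - 1 by linarith]
      linear_combination a * ha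
    rw [hsq2, Real.sqrt_sq (div_nonneg h3p.le hs0.le)]
  have hEq : Real.sqrt (1 + ‖q - a • ω‖ ^ 2)
      = (q0 * (p0 + q0) - a * (u + v)) / (p0 + q0) := by
    have hsq2 : 1 + ‖q - a • ω‖ ^ 2 = ((q0 * (p0 + q0) - a * (u + v)) / (p0 + q0)) ^ 2 := by
      rw [div_pow, eq_div_iff hs2, hnq, show ‖q‖ ^ 2 = q0 ^ 2 - 1 by linarith]
      linear_combination a * ha
    rw [hsq2, Real.sqrt_sq (div_nonneg h3q.le hs0.le)]
  rw [hEp, hEq]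
  field_simp
  ring
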